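/- Let I₅ ⊆ P be the ideal generated by {Dⁱ(g) : i ≥ 0} where g = (w⁽⁰⁾)² − (ℓ⁽⁰⁾)⁵. Then the quotient ring P/I₅ is not reduced: its nilradical is nonzero, i.e., the radical of I₅ is strictly larger than I₅. (Thus even though Spec ℂ[ℓ,w]/(w² − ℓ⁵) is reduced, its arc space is not.) -/
import Mathlib


open MvPolynomial

noncomputable section

/-- The polynomial ring `P = ℂ[ℓ⁽⁰⁾, ℓ⁽¹⁾, …, w⁽⁰⁾, w⁽¹⁾, …]`:
variables are indexed by `Fin 2 × ℕ`, where `(0, i)` is `ℓ⁽ⁱ⁾` and `(1, i)` is `w⁽ⁱ⁾`. -/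
abbrev P : Type := MvPolynomial (Fin 2 × ℕ) ℂ

/-- The unique ℂ-linear derivation `D : P → P` with `D(ℓ⁽ⁱ⁾) = ℓ⁽ⁱ⁺¹⁾`, `D(w⁽ⁱ⁾) = w⁽ⁱ⁺¹⁾`. -/
def D : Derivation ℂ P P :=
  MvPolynomial.mkDerivation ℂ (fun p : Fin 2 × ℕ => (X (p.1, p.2 + 1) : P))

/-- `ℓ⁽ⁱ⁾` -/
def lv (i : ℕ) : P := X (0, i)

/-- `w⁽ⁱ⁾` -/
def wv (i : ℕ) : P := X (1, i)

/-- `g = (w⁽⁰⁾)² − (ℓ⁽⁰⁾)⁵`. -/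
def g : P := wv 0 ^ 2 - lv 0 ^ 5

/-- The ideal `I₅` generated by all `Dⁱ(g)`, `i ≥ 0`. -/
def I₅ : Ideal P := Ideal.span (Set.range fun i : ℕ => (⇑D)^[i] g)

/- ### Auxiliary material -/

lemma D_lv (i : ℕ) : D (lv i) = lv (i + 1) :=
  MvPolynomial.mkDerivation_X ℂ _ _

lemma D_wv (i : ℕ) : D (wv i) = wv (i + 1) :=
  MvPolynomial.mkDerivation_X ℂ _ _

/-- The nilpotent witness `z = 2ℓ⁽⁰⁾w⁽¹⁾ − 5ℓ⁽¹⁾w⁽⁰⁾`. -/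
def zW : P := 2 * lv 0 * wv 1 - 5 * lv 1 * wv 0

lemma Dg1 : D g = wv 0 * wv 1 + wv 0 * wv 1
    - (lv 0 ^ 4 * lv 1 + lv 0 ^ 4 * lv 1 + lv 0 ^ 4 * lv 1 + lv 0 ^ 4 * lv 1
      + lv 0 ^ 4 * lv 1) := by
  rw [g, map_sub, Derivation.leibniz_pow, Derivation.leibniz_pow, D_lv, D_wv]
  simp only [smul_eq_mul, nsmul_eq_mul]
  push_cast
  ring

lemma Dg2 : D (D g) = 2 * wv 1 ^ 2 + 2 * wv 0 * wv 2
    - 20 * lv 0 ^ 3 * lv 1 ^ 2 - 5 * lv 0 ^ 4 * lv 2 := by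
  rw [Dg1, map_sub, map_add, map_add, map_add, map_add, map_add]
  simp only [Derivation.leibniz, Derivation.leibniz_pow, D_lv, D_wv,
    smul_eq_mul, nsmul_eq_mul]
  push_cast
  ring

lemma g_mem : g ∈ I₅ := Ideal.subset_span ⟨0, rfl⟩

lemma Dg_mem : D g ∈ I₅ := Ideal.subset_span ⟨1, by simp⟩

lemma DDg_mem : D (D g) ∈ I₅ := Ideal.subset_span ⟨2, by
  simp [Function.iterate_succ_apply']⟩

/-- The certificate: `z³ ∈ I₅`. -/
lemma zW_cube_mem : zW ^ 3 ∈ I₅ := by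
  have key : zW ^ 3 =
      (-125 * lv 1 ^ 3 * wv 0 + 20 * lv 0 * lv 1 ^ 2 * wv 1
        - 20 * lv 0 ^ 2 * lv 2 * wv 1 + 20 * lv 0 ^ 2 * lv 1 * wv 2) * g
      + (65 * lv 0 * lv 1 ^ 2 * wv 0 + 10 * lv 0 ^ 2 * lv 2 * wv 0
        - 20 * lv 0 ^ 2 * lv 1 * wv 1 - 4 * lv 0 ^ 3 * wv 2) * D g
      + (-10 * lv 0 ^ 2 * lv 1 * wv 0 + 4 * lv 0 ^ 3 * wv 1) * (D (D g)) := by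
    rw [Dg2, Dg1, g, zW]
    ring
  rw [key]
  exact Ideal.add_mem _ (Ideal.add_mem _ (Ideal.mul_mem_left _ _ g_mem)
    (Ideal.mul_mem_left _ _ Dg_mem)) (Ideal.mul_mem_left _ _ DDg_mem)

/- ### The evaluation detecting `z ∉ I₅` -/

/-- `A = ℂ[s]/(s⁴)`. -/
abbrev Aq : Type := Polynomial ℂ ⧸ Ideal.span {(Polynomial.X : Polynomial ℂ) ^ 4}

def ss : Aq := Ideal.Quotient.mk _ Polynomial.X

lemma ss_pow_four : ss ^ 4 = 0 := by
  rw [ss, ← map_pow, Ideal.Quotient.eq_zero_iff_mem]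
  exact Ideal.subset_span rfl

/-- The evaluation `ℓ⁽⁰⁾ ↦ s`, `w⁽¹⁾ ↦ s²`, all other variables `↦ 0`. -/
def σev : P →ₐ[ℂ] Aq :=
  aeval (fun p : Fin 2 × ℕ =>
    if p = (0, 0) then ss else if p = (1, 1) then ss ^ 2 else 0)

lemma σev_X (p : Fin 2 × ℕ) :
    σev (X p) = if p = (0, 0) then ss else if p = (1, 1) then ss ^ 2 else 0 :=
  aeval_X _ _

lemma σev_lv0 : σev (lv 0) = ss := by
  rw [lv, σev_X, if_pos rfl]

lemma σev_lv_succ (i : ℕ) : σev (lv (i + 1)) = 0 := by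
  rw [lv, σev_X, if_neg (by simp [Prod.ext_iff]), if_neg (by simp [Prod.ext_iff])]

lemma σev_wv1 : σev (wv 1) = ss ^ 2 := by
  rw [wv, σev_X, if_neg (by simp [Prod.ext_iff]), if_pos rfl]

lemma σev_wv_ne (i : ℕ) (h : i ≠ 1) : σev (wv i) = 0 := by
  rw [wv, σev_X, if_neg (by simp [Prod.ext_iff]), if_neg (by simp [Prod.ext_iff, h])]

/-- The ideal generated by all `ℓ⁽ⁱ⁾`. -/
def Lid : Ideal P := Ideal.span (Set.range fun i : ℕ => (X (0, i) : P))

/-- The ideal generated by all `w⁽ⁱ⁾`. -/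
def Wid : Ideal P := Ideal.span (Set.range fun i : ℕ => (X (1, i) : P))

lemma D_mem_Lid : ∀ x ∈ Lid, D x ∈ Lid := by
  intro x hx
  refine Submodule.span_induction ?_ ?_ ?_ ?_ hx
  · rintro _ ⟨i, rfl⟩
    show D (X (0, i)) ∈ Lid
    rw [show (X ((0 : Fin 2), i) : P) = lv i from rfl, D_lv]
    exact Ideal.subset_span ⟨i + 1, rfl⟩
  · simp
  · intro a b _ _ ha hb
    rw [map_add]; exact Ideal.add_mem _ ha hb
  · intro r a ha hDa
    rw [smul_eq_mul, Derivation.leibniz, smul_eq_mul, smul_eq_mul]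
    exact Ideal.add_mem _ (Ideal.mul_mem_left _ _ hDa) (Ideal.mul_mem_right _ _ ha)

lemma D_mem_Wid : ∀ x ∈ Wid, D x ∈ Wid := by
  intro x hx
  refine Submodule.span_induction ?_ ?_ ?_ ?_ hx
  · rintro _ ⟨i, rfl⟩
    show D (X (1, i)) ∈ Wid
    rw [show (X ((1 : Fin 2), i) : P) = wv i from rfl, D_wv]
    exact Ideal.subset_span ⟨i + 1, rfl⟩
  · simp
  · intro a b _ _ ha hb
    rw [map_add]; exact Ideal.add_mem _ ha hb
  · intro r a ha hDa
    rw [smul_eq_mul, Derivation.leibniz, smul_eq_mul, smul_eq_mul]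
    exact Ideal.add_mem _ (Ideal.mul_mem_left _ _ hDa) (Ideal.mul_mem_right _ _ ha)

lemma D_mem_pow (I : Ideal P) (hI : ∀ x ∈ I, D x ∈ I) :
    ∀ n : ℕ, ∀ x ∈ I ^ (n + 1), D x ∈ I ^ (n + 1) := by
  intro n
  induction n with
  | zero => simpa using hI
  | succ n ih =>
    intro x hx
    rw [pow_succ] at hx ⊢
    refine Submodule.mul_induction_on hx ?_ ?_
    · intro m hm c hc
      rw [Derivation.leibniz, smul_eq_mul, smul_eq_mul, mul_comm c (D m)]
      exact Ideal.add_mem _ (Ideal.mul_mem_mul hm (hI c hc))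
        (Ideal.mul_mem_mul (ih m hm) hc)
    · intro a b ha hb
      rw [map_add]; exact Ideal.add_mem _ ha hb

/-- The invariant ideal `T = Wid² + Lid⁵`. -/
def Tid : Ideal P := Wid ^ 2 ⊔ Lid ^ 5

lemma D_mem_Tid : ∀ x ∈ Tid, D x ∈ Tid := by
  intro x hx
  rw [Tid, Submodule.mem_sup] at hx
  obtain ⟨a, ha, b, hb, rfl⟩ := hx
  rw [map_add]
  exact Ideal.add_mem _
    (Ideal.mem_sup_left (D_mem_pow Wid D_mem_Wid 1 a ha))
    (Ideal.mem_sup_right (D_mem_pow Lid D_mem_Lid 4 b hb))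

lemma g_mem_Tid : g ∈ Tid := by
  have hw : wv 0 ∈ Wid := Ideal.subset_span ⟨0, rfl⟩
  have hl : lv 0 ∈ Lid := Ideal.subset_span ⟨0, rfl⟩
  rw [g]
  exact Ideal.sub_mem _
    (Ideal.mem_sup_left (Ideal.pow_mem_pow hw 2))
    (Ideal.mem_sup_right (Ideal.pow_mem_pow hl 5))

lemma iterate_mem_Tid (i : ℕ) : (⇑D)^[i] g ∈ Tid := by
  induction i with
  | zero => exact g_mem_Tid
  | succ i ih => rw [Function.iterate_succ_apply']; exact D_mem_Tid _ ih

lemma I₅_le_Tid : I₅ ≤ Tid := by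
  rw [I₅, Ideal.span_le]
  rintro _ ⟨i, rfl⟩
  exact iterate_mem_Tid i

lemma σev_Tid : ∀ x ∈ Tid, σev x = 0 := by
  have hL : Ideal.map σev.toRingHom Lid ≤ Ideal.span {ss} := by
    rw [Lid, Ideal.map_span, Ideal.span_le]
    rintro _ ⟨_, ⟨i, rfl⟩, rfl⟩
    simp only [AlgHom.toRingHom_eq_coe, RingHom.coe_coe]
    show σev (lv i) ∈ Ideal.span {ss}
    rcases i with _ | i
    · rw [σev_lv0]; exact Ideal.subset_span rfl
    · rw [σev_lv_succ]; exact Ideal.zero_mem _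
  have hW : Ideal.map σev.toRingHom Wid ≤ Ideal.span {ss ^ 2} := by
    rw [Wid, Ideal.map_span, Ideal.span_le]
    rintro _ ⟨_, ⟨i, rfl⟩, rfl⟩
    simp only [AlgHom.toRingHom_eq_coe, RingHom.coe_coe]
    show σev (wv i) ∈ Ideal.span {ss ^ 2}
    rcases eq_or_ne i 1 with h | h
    · rw [h, σev_wv1]; exact Ideal.subset_span rfl
    · rw [σev_wv_ne i h]; exact Ideal.zero_mem _
  intro x hx
  have hmem : σev x ∈ Ideal.map σev.toRingHom Tid := Ideal.mem_map_of_mem _ hx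
  rw [Tid, Ideal.map_sup, Ideal.map_pow, Ideal.map_pow] at hmem
  have h1 : (Ideal.map σev.toRingHom Wid) ^ 2 ⊔ (Ideal.map σev.toRingHom Lid) ^ 5
      ≤ ⊥ := by
    apply sup_le
    · calc (Ideal.map σev.toRingHom Wid) ^ 2 ≤ (Ideal.span {ss ^ 2}) ^ 2 :=
            Ideal.pow_right_mono hW 2
        _ = Ideal.span {(ss ^ 2) ^ 2} := (Ideal.span_singleton_pow _ _)
        _ ≤ ⊥ := le_of_eq (Ideal.span_singleton_eq_bot.mpr
              (by rw [show ((ss ^ 2) ^ 2 : Aq) = ss ^ 4 by ring, ss_pow_four]))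
    · calc (Ideal.map σev.toRingHom Lid) ^ 5 ≤ (Ideal.span {ss}) ^ 5 :=
            Ideal.pow_right_mono hL 5
        _ = Ideal.span {ss ^ 5} := (Ideal.span_singleton_pow _ _)
        _ ≤ ⊥ := le_of_eq (Ideal.span_singleton_eq_bot.mpr
              (by rw [show (ss ^ 5 : Aq) = ss ^ 4 * ss by ring, ss_pow_four, zero_mul]))
  have := h1 hmem
  simpa using this

lemma σev_zW : σev zW = 2 * ss ^ 3 := by
  rw [zW, map_sub, map_mul, map_mul, map_mul, map_mul, σev_lv0, σev_wv1,
    show lv 1 = lv (0 + 1) from rfl, σev_lv_succ, map_ofNat, map_ofNat]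
  ring

lemma ss_cube_ne : (2 : Aq) * ss ^ 3 ≠ 0 := by
  intro h
  rw [ss, ← map_pow, show ((2 : Aq)) = Ideal.Quotient.mk _ (Polynomial.C 2) by rw [show (Polynomial.C (2:ℂ)) = (2 : Polynomial ℂ) from map_ofNat _ 2, map_ofNat],
    ← map_mul, Ideal.Quotient.eq_zero_iff_mem, Ideal.mem_span_singleton] at h
  have h2 : (Polynomial.C (2:ℂ) * Polynomial.X ^ 3 : Polynomial ℂ) ≠ 0 := by
    intro hc
    have := Polynomial.natDegree_C_mul_X_pow 3 (2:ℂ) (by norm_num)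
    rw [hc] at this
    simp at this
  have hdeg := Polynomial.degree_le_of_dvd h h2
  rw [Polynomial.degree_X_pow, Polynomial.degree_C_mul_X_pow 3 (by norm_num : (2:ℂ) ≠ 0)] at hdeg
  norm_num at hdeg

lemma zW_not_mem : zW ∉ I₅ := by
  intro h
  exact ss_cube_ne (σev_zW ▸ σev_Tid zW (I₅_le_Tid h))

/-- The quotient `P/I₅`, the coordinate ring of the arc space of
`Spec ℂ[ℓ,w]/(w² − ℓ⁵)`, is not reduced: the radical of `I₅` is strictly larger than `I₅`. -/
theorem arc_space_W25_not_reduced :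
    ¬ IsReduced (P ⧸ I₅) ∧ I₅.radical ≠ I₅ := by
  constructor
  · intro hred
    have hnil : IsNilpotent (Ideal.Quotient.mk I₅ zW) := by
      refine ⟨3, ?_⟩
      rw [← map_pow, Ideal.Quotient.eq_zero_iff_mem]
      exact zW_cube_mem
    have := hnil.eq_zero
    rw [Ideal.Quotient.eq_zero_iff_mem] at this
    exact zW_not_mem this
  · intro h
    have : zW ∈ I₅.radical := ⟨3, zW_cube_mem⟩
    rw [h] at this
    exact zW_not_mem this

end
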